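/- Let B be an n×n exchange matrix and let C ⊆ ℝ^n. Then C is contained in some B-cone if and only if the set η_κ^B(C) is sign-coherent for every finite sequence κ of indices in [n]. -/

import Mathlib

open scoped BigOperators

namespace MutationFanPaper

/-- An exchange matrix: a skew-symmetrizable `n × n` integer matrix. -/
def IsExchangeMatrix {n : ℕ} (B : Matrix (Fin n) (Fin n) ℤ) : Prop :=
  ∃ d : Fin n → ℤ, (∀ i, 0 < d i) ∧ ∀ i j, d i * B i j = -(d j * B j i)

/-- Matrix mutation in direction `k`. -/
def mutate {n : ℕ} (B : Matrix (Fin n) (Fin n) ℤ) (k : Fin n) : Matrix (Fin n) (Fin n) ℤ :=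
  fun i j =>
    if i = k ∨ j = k then -B i j
    else B i j + Int.sign (B k j) * max (B i k * B k j) 0

/-- The mutation map `η_k^B : ℝⁿ → ℝⁿ`. -/
noncomputable def etaStep {n : ℕ} (B : Matrix (Fin n) (Fin n) ℤ) (k : Fin n) (a : Fin n → ℝ) : Fin n → ℝ :=
  fun j =>
    if j = k then -a k
    else if 0 ≤ a k ∧ 0 ≤ B k j then a j + a k * (B k j : ℝ)
    else if a k ≤ 0 ∧ B k j ≤ 0 then a j - a k * (B k j : ℝ)
    else a j

/-- `etaSeq B κ` is the mutation map `η_κ^B`, where the list `κ` records the indices in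
order of application (the head of the list is applied first, using the matrix `B` itself). -/
noncomputable def etaSeq {n : ℕ} (B : Matrix (Fin n) (Fin n) ℤ) : List (Fin n) → (Fin n → ℝ) → Fin n → ℝ
  | [], a => a
  | k :: κ, a => etaSeq (mutate B k) κ (etaStep B k a)

/-- Iterated matrix mutation along a list of indices; the head is applied first. -/
def mutateSeq {n : ℕ} (B : Matrix (Fin n) (Fin n) ℤ) : List (Fin n) → Matrix (Fin n) (Fin n) ℤ
  | [] => B
  | k :: κ => mutateSeq (mutate B k) κ

/-- The copy of ℤ inside ℝ, as a subring. -/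
def intSR : Subring ℝ := (Int.castRingHom ℝ).range

/-- The copy of ℚ inside ℝ, as a subring. -/
noncomputable def ratSR : Subring ℝ := (Rat.castHom ℝ).range

/-- The formal expression `Σ_{i ∈ S} c i • v i` is a `B`-coherent linear relation. -/
def IsBCoherentRel {n : ℕ} (B : Matrix (Fin n) (Fin n) ℤ) {ι : Type*} (S : Finset ι)
    (v : ι → Fin n → ℝ) (c : ι → ℝ) : Prop :=
  ∀ κ : List (Fin n),
    (∑ i ∈ S, c i • etaSeq B κ (v i)) = 0 ∧
    (∑ i ∈ S, c i • (fun j => min (etaSeq B κ (v i) j) 0)) = 0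

/-- The formal expression `a - Σ_{i ∈ S} c i • v i` is a `B`-coherent linear relation. -/
def IsBCoherentDiff {n : ℕ} (B : Matrix (Fin n) (Fin n) ℤ) (a : Fin n → ℝ) {ι : Type*}
    (S : Finset ι) (v : ι → Fin n → ℝ) (c : ι → ℝ) : Prop :=
  ∀ κ : List (Fin n),
    (etaSeq B κ a - ∑ i ∈ S, c i • etaSeq B κ (v i)) = 0 ∧
    ((fun j => min (etaSeq B κ a j) 0) -
      ∑ i ∈ S, c i • (fun j => min (etaSeq B κ (v i) j) 0)) = 0

/-- The family `b` is an `R`-spanning set for `B` (a family of vectors in `Rⁿ` such that every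
`a ∈ Rⁿ` admits a `B`-coherent relation `a - Σ_{i ∈ S} c i • b i` with coefficients in `R`). -/
def SpanningOver {n : ℕ} (R : Subring ℝ) (B : Matrix (Fin n) (Fin n) ℤ) {ι : Type*}
    (b : ι → Fin n → ℝ) : Prop :=
  (∀ i j, b i j ∈ R) ∧
  ∀ a : Fin n → ℝ, (∀ j, a j ∈ R) →
    ∃ (S : Finset ι) (c : ι → ℝ), (∀ i ∈ S, c i ∈ R) ∧ IsBCoherentDiff B a S b c

/-- The family `b` is an `R`-independent set for `B`. -/
def IndependentOver {n : ℕ} (R : Subring ℝ) (B : Matrix (Fin n) (Fin n) ℤ) {ι : Type*}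
    (b : ι → Fin n → ℝ) : Prop :=
  (∀ i j, b i j ∈ R) ∧
  ∀ (S : Finset ι) (c : ι → ℝ), (∀ i ∈ S, c i ∈ R) → IsBCoherentRel B S b c →
    ∀ i ∈ S, c i = 0

/-- The family `b` is an `R`-basis for `B`. -/
def BasisOver {n : ℕ} (R : Subring ℝ) (B : Matrix (Fin n) (Fin n) ℤ) {ι : Type*}
    (b : ι → Fin n → ℝ) : Prop :=
  SpanningOver R B b ∧ IndependentOver R B b

/-- The family `b` is a positive `R`-basis for `B`. -/
def PositiveBasisOver {n : ℕ} (R : Subring ℝ) (B : Matrix (Fin n) (Fin n) ℤ) {ι : Type*}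
    (b : ι → Fin n → ℝ) : Prop :=
  BasisOver R B b ∧
  ∀ a : Fin n → ℝ, (∀ j, a j ∈ R) →
    ∃ (S : Finset ι) (c : ι → ℝ), (∀ i ∈ S, c i ∈ R ∧ 0 ≤ c i) ∧ IsBCoherentDiff B a S b c

/-- The relation `a ≡^B a'`: all mutation maps give componentwise equal signs. -/
def eqB {n : ℕ} (B : Matrix (Fin n) (Fin n) ℤ) (a a' : Fin n → ℝ) : Prop :=
  ∀ (κ : List (Fin n)) (j : Fin n),
    Real.sign (etaSeq B κ a j) = Real.sign (etaSeq B κ a' j)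

/-- A `B`-class: an equivalence class of `≡^B`. -/
def IsBClass {n : ℕ} (B : Matrix (Fin n) (Fin n) ℤ) (C : Set (Fin n → ℝ)) : Prop :=
  ∃ a, C = {a' | eqB B a a'}

/-- A `B`-cone: the closure of a `B`-class. -/
def IsBCone {n : ℕ} (B : Matrix (Fin n) (Fin n) ℤ) (C : Set (Fin n → ℝ)) : Prop :=
  ∃ D, IsBClass B D ∧ C = closure D

/-- A convex cone: a set closed under addition and positive scaling. -/
def IsConvexCone {n : ℕ} (C : Set (Fin n → ℝ)) : Prop :=
  (∀ x ∈ C, ∀ y ∈ C, x + y ∈ C) ∧ ∀ x ∈ C, ∀ r : ℝ, 0 < r → r • x ∈ C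

/-- `F` is a face of the convex cone `C`: a convex subset such that any line segment
contained in `C` whose interior meets `F` lies entirely in `F`. -/
def IsFaceOf {n : ℕ} (C F : Set (Fin n → ℝ)) : Prop :=
  F ⊆ C ∧ Convex ℝ F ∧
    ∀ x y : Fin n → ℝ, segment ℝ x y ⊆ C → (openSegment ℝ x y ∩ F).Nonempty →
      segment ℝ x y ⊆ F

/-- The mutation fan `ℱ_B`: all `B`-cones and all faces of `B`-cones. -/
def MutFan {n : ℕ} (B : Matrix (Fin n) (Fin n) ℤ) : Set (Set (Fin n → ℝ)) :=
  {C | IsBCone B C ∨ ∃ D, IsBCone B D ∧ IsFaceOf D C}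

/-- A fan: a collection of closed convex cones, closed under taking faces, in which the
intersection of any two cones is a face of each. -/
def IsFan {n : ℕ} (F : Set (Set (Fin n → ℝ))) : Prop :=
  (∀ C ∈ F, IsClosed C ∧ IsConvexCone C) ∧
  (∀ C ∈ F, ∀ G, IsFaceOf C G → G ∈ F) ∧
  ∀ C ∈ F, ∀ D ∈ F, IsFaceOf C (C ∩ D) ∧ IsFaceOf D (C ∩ D)

/-- A set of vectors is sign-coherent if no two of its members have strictly opposite
signs in any coordinate. -/
def SignCoherentSet {n : ℕ} (S : Set (Fin n → ℝ)) : Prop :=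
  ∀ x ∈ S, ∀ y ∈ S, ∀ j, ¬(x j < 0 ∧ 0 < y j)

/-- The ray spanned by a vector `v`. -/
def rayOf {n : ℕ} (v : Fin n → ℝ) : Set (Fin n → ℝ) :=
  {x | ∃ t : ℝ, 0 ≤ t ∧ x = t • v}

/-- `C` is a ray of the fan `F`: a one-dimensional cone belonging to `F`. -/
def IsRayOf {n : ℕ} (F : Set (Set (Fin n → ℝ))) (C : Set (Fin n → ℝ)) : Prop :=
  C ∈ F ∧ ∃ v : Fin n → ℝ, v ≠ 0 ∧ C = rayOf v

/-- A simplicial cone: the nonnegative span of finitely many linearly independent vectors. -/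
def IsSimplicialCone {n : ℕ} (C : Set (Fin n → ℝ)) : Prop :=
  ∃ (k : ℕ) (v : Fin k → Fin n → ℝ), LinearIndependent ℝ v ∧
    C = {x | ∃ c : Fin k → ℝ, (∀ i, 0 ≤ c i) ∧ x = ∑ i, c i • v i}

/-- A rational cone: the nonnegative span of finitely many rational vectors. -/
def IsRationalCone {n : ℕ} (C : Set (Fin n → ℝ)) : Prop :=
  ∃ (k : ℕ) (v : Fin k → Fin n → ℝ), (∀ i j, ∃ q : ℚ, v i j = (q : ℝ)) ∧
    C = {x | ∃ c : Fin k → ℝ, (∀ i, 0 ≤ c i) ∧ x = ∑ i, c i • v i}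

/-- `F'` is the rational part of the fan `F`. -/
def IsRationalPart {n : ℕ} (F F' : Set (Set (Fin n → ℝ))) : Prop :=
  IsFan F' ∧ (∀ C ∈ F', IsRationalCone C) ∧
  (∀ C ∈ F', ∃ D ∈ F, C ⊆ D) ∧
  ∀ C ∈ F, ∃ D ∈ F', D ⊆ C ∧ (∀ D' ∈ F', D' ⊆ C → D' ⊆ D) ∧
    ∀ x ∈ C, (∀ j, ∃ q : ℚ, x j = (q : ℝ)) → x ∈ D

/-- `v` is the smallest nonzero integer vector in the cone `C`. -/
def IsSmallestIntVec {n : ℕ} (C : Set (Fin n → ℝ)) (v : Fin n → ℝ) : Prop :=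
  v ∈ C ∧ v ≠ 0 ∧ (∀ j, ∃ m : ℤ, v j = (m : ℝ)) ∧
    ∀ w ∈ C, w ≠ 0 → (∀ j, ∃ m : ℤ, w j = (m : ℝ)) → ‖v‖ ≤ ‖w‖

end MutationFanPaper

namespace MutationFanPaper

/-!
Sign-coherence is exactly what makes every `η_κ^B` additive and positively homogeneous on
nonnegative combinations of points of `C`: a single mutation step is linear on each of the
half-spaces `a_k ≥ 0` and `a_k ≤ 0`.

If `C` lies in the closure of the `B`-class of `a`, then on that class every coordinate of
every `η_κ^B` has the constant sign of the corresponding coordinate at `a`, so by continuity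
these coordinates weakly agree in sign on `C`.

Conversely, pick a finite `F ⊆ C` spanning the linear span of `C` and put `a = ∑_{f ∈ F} f`.
For `x ∈ C` and `ε > 0`, each coordinate of `η_κ^B(x + ε a) = η_κ^B(x) + ε η_κ^B(a)` has the
sign of the one of `η_κ^B(a)`: the two summands weakly agree in sign, and a zero coordinate of
`η_κ^B(a)` vanishes on `F`, hence on its span. Thus `x + ε a ≡^B a`, and `x` is in the
`B`-cone of `a`.
-/

lemma nonneg_of_sign_eq {x y : ℝ} (h : Real.sign x = Real.sign y) (hy : 0 ≤ y) : 0 ≤ x := by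
  by_contra! hx
  rw [Real.sign_of_neg hx] at h
  rcases hy.eq_or_lt with rfl | hy
  · norm_num [Real.sign_zero] at h
  · norm_num [Real.sign_of_pos hy] at h

lemma nonpos_of_sign_eq {x y : ℝ} (h : Real.sign x = Real.sign y) (hy : y ≤ 0) : x ≤ 0 := by
  have := nonneg_of_sign_eq (x := -x) (y := -y) (by rw [Real.sign_neg, Real.sign_neg, h])
    (neg_nonneg.mpr hy)
  linarith

lemma sign_add_mul_eq_sign {u v ε : ℝ} (huv : 0 ≤ u * v) (hv : v = 0 → u = 0) (hε : 0 < ε) :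
    Real.sign (u + ε * v) = Real.sign v := by
  rcases lt_trichotomy v 0 with h | h | h
  · have : u ≤ 0 := by nlinarith
    rw [Real.sign_of_neg h, Real.sign_of_neg (by nlinarith)]
  · simp [h, hv h]
  · have : 0 ≤ u := by nlinarith
    rw [Real.sign_of_pos h, Real.sign_of_pos (by nlinarith)]

section SignCoherent

variable {n : ℕ} {S T : Set (Fin n → ℝ)}

lemma signCoherentSet_iff :
    SignCoherentSet S ↔ ∀ j, (∀ x ∈ S, 0 ≤ x j) ∨ ∀ x ∈ S, x j ≤ 0 := by
  constructor
  · intro hS j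
    by_cases hpos : ∃ y ∈ S, 0 < y j
    · obtain ⟨y, hy, hyj⟩ := hpos
      exact Or.inl fun x hx => not_lt.mp fun hxj => hS x hx y hy j ⟨hxj, hyj⟩
    · push Not at hpos
      exact Or.inr hpos
  · rintro hS x hx y hy j ⟨hxj, hyj⟩
    rcases hS j with h | h
    · exact (h x hx).not_gt hxj
    · exact (h y hy).not_gt hyj

lemma SignCoherentSet.mono (hT : SignCoherentSet T) (hST : S ⊆ T) : SignCoherentSet S :=
  fun x hx y hy => hT x (hST hx) y (hST hy)

lemma SignCoherentSet.mul_nonneg (hS : SignCoherentSet S) {x y : Fin n → ℝ} (hx : x ∈ S)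
    (hy : y ∈ S) (j : Fin n) : 0 ≤ x j * y j := by
  rcases signCoherentSet_iff.mp hS j with h | h
  · exact _root_.mul_nonneg (h x hx) (h y hy)
  · exact mul_nonneg_of_nonpos_of_nonpos (h x hx) (h y hy)

end SignCoherent

section Mutation

variable {n : ℕ} (B : Matrix (Fin n) (Fin n) ℤ)

lemma etaStep_apply (k : Fin n) (a : Fin n → ℝ) (j : Fin n) :
    etaStep B k a j = if j = k then -a k else
      a j + max (a k) 0 * max (B k j : ℝ) 0 - min (a k) 0 * min (B k j : ℝ) 0 := by
  unfold etaStep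
  rcases le_total (a k) 0 with ha | ha <;> rcases le_total (B k j : ℝ) 0 with hb | hb <;>
    split_ifs <;> simp_all
  omega

lemma etaStep_apply_of_nonneg (k : Fin n) {a : Fin n → ℝ} (ha : 0 ≤ a k) (j : Fin n) :
    etaStep B k a j = if j = k then -a k else a j + a k * max (B k j : ℝ) 0 := by
  simp [etaStep_apply, ha]

lemma etaStep_apply_of_nonpos (k : Fin n) {a : Fin n → ℝ} (ha : a k ≤ 0) (j : Fin n) :
    etaStep B k a j = if j = k then -a k else a j - a k * min (B k j : ℝ) 0 := by
  simp [etaStep_apply, ha]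

lemma continuous_etaStep (k : Fin n) : Continuous (etaStep B k) :=
  continuous_pi fun j => by
    simp only [etaStep_apply]
    split_ifs <;> fun_prop

lemma continuous_etaSeq (κ : List (Fin n)) : Continuous (etaSeq B κ) := by
  induction κ generalizing B with
  | nil => exact continuous_id
  | cons k κ ih => exact (ih (mutate B k)).comp (continuous_etaStep B k)

lemma etaStep_sum_smul {ι : Type*} (k : Fin n) {C : Set (Fin n → ℝ)} (hC : SignCoherentSet C)
    (S : Finset ι) {v : ι → Fin n → ℝ} (hv : ∀ i ∈ S, v i ∈ C) {c : ι → ℝ}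
    (hc : ∀ i ∈ S, 0 ≤ c i) :
    etaStep B k (∑ i ∈ S, c i • v i) = ∑ i ∈ S, c i • etaStep B k (v i) := by
  ext j
  simp only [Finset.sum_apply, Pi.smul_apply, smul_eq_mul]
  rcases signCoherentSet_iff.mp hC k with hk | hk
  · have hsum : 0 ≤ ∑ i ∈ S, c i * v i k :=
      Finset.sum_nonneg fun i hi => mul_nonneg (hc i hi) (hk _ (hv i hi))
    have hterm : ∀ i ∈ S, c i * etaStep B k (v i) j =
        c i * if j = k then -v i k else v i j + v i k * max (B k j : ℝ) 0 := fun i hi => by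
      rw [etaStep_apply_of_nonneg B k (hk _ (hv i hi))]
    rw [Finset.sum_congr rfl hterm, etaStep_apply_of_nonneg B k (by simpa using hsum)]
    split_ifs <;> simp [mul_add, Finset.sum_add_distrib, Finset.sum_mul, mul_assoc]
  · have hsum : ∑ i ∈ S, c i * v i k ≤ 0 :=
      Finset.sum_nonpos fun i hi => mul_nonpos_of_nonneg_of_nonpos (hc i hi) (hk _ (hv i hi))
    have hterm : ∀ i ∈ S, c i * etaStep B k (v i) j =
        c i * if j = k then -v i k else v i j - v i k * min (B k j : ℝ) 0 := fun i hi => by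
      rw [etaStep_apply_of_nonpos B k (hk _ (hv i hi))]
    rw [Finset.sum_congr rfl hterm, etaStep_apply_of_nonpos B k (by simpa using hsum)]
    split_ifs <;> simp [mul_sub, Finset.sum_sub_distrib, Finset.sum_mul, mul_assoc]

lemma etaSeq_sum_smul {ι : Type*} {C : Set (Fin n → ℝ)}
    (hC : ∀ κ, SignCoherentSet (etaSeq B κ '' C)) (κ : List (Fin n)) (S : Finset ι)
    {v : ι → Fin n → ℝ} (hv : ∀ i ∈ S, v i ∈ C) {c : ι → ℝ} (hc : ∀ i ∈ S, 0 ≤ c i) :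
    etaSeq B κ (∑ i ∈ S, c i • v i) = ∑ i ∈ S, c i • etaSeq B κ (v i) := by
  induction κ generalizing B C v with
  | nil => rfl
  | cons k κ ih =>
    have hC₀ : SignCoherentSet C := by simpa [etaSeq] using hC []
    show etaSeq (mutate B k) κ (etaStep B k _) = _
    rw [etaStep_sum_smul B k hC₀ S hv hc]
    refine ih (mutate B k) (C := etaStep B k '' C) (fun κ' => ?_)
      fun i hi => Set.mem_image_of_mem _ (hv i hi)
    rw [Set.image_image]
    exact hC (k :: κ')

end Mutation

section Cone

variable {n : ℕ} (B : Matrix (Fin n) (Fin n) ℤ)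

lemma signCoherent_closure_bClass (a : Fin n → ℝ) (κ : List (Fin n)) :
    SignCoherentSet (etaSeq B κ '' closure {a' | eqB B a a'}) := by
  rw [signCoherentSet_iff]
  intro j
  have hg : Continuous fun z => etaSeq B κ z j :=
    (continuous_apply j).comp (continuous_etaSeq B κ)
  rcases le_total 0 (etaSeq B κ a j) with ha | ha
  · left
    rintro _ ⟨z, hz, rfl⟩
    refine closure_minimal (fun y hy => ?_) (isClosed_le continuous_const hg) hz
    exact nonneg_of_sign_eq (hy κ j).symm ha
  · right
    rintro _ ⟨z, hz, rfl⟩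
    refine closure_minimal (fun y hy => ?_) (isClosed_le hg continuous_const) hz
    exact nonpos_of_sign_eq (hy κ j).symm ha

variable {B} {C : Set (Fin n → ℝ)}

lemma signCoherent_insert_sum_smul (hC : ∀ κ, SignCoherentSet (etaSeq B κ '' C))
    {ι : Type*} (S : Finset ι) {v : ι → Fin n → ℝ}
    (hv : ∀ i ∈ S, v i ∈ C) {c : ι → ℝ} (hc : ∀ i ∈ S, 0 ≤ c i) (κ : List (Fin n)) :
    SignCoherentSet (etaSeq B κ '' insert (∑ i ∈ S, c i • v i) C) := by
  rw [Set.image_insert_eq, signCoherentSet_iff, etaSeq_sum_smul B hC κ S hv hc]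
  intro j
  rcases signCoherentSet_iff.mp (hC κ) j with h | h
  · refine Or.inl (Set.forall_mem_insert.mpr ⟨?_, h⟩)
    simpa using Finset.sum_nonneg fun i hi =>
      mul_nonneg (hc i hi) (h _ (Set.mem_image_of_mem _ (hv i hi)))
  · refine Or.inr (Set.forall_mem_insert.mpr ⟨?_, h⟩)
    simpa using Finset.sum_nonpos fun i hi =>
      mul_nonpos_of_nonneg_of_nonpos (hc i hi) (h _ (Set.mem_image_of_mem _ (hv i hi)))

lemma signCoherent_insert_sum (hC : ∀ κ, SignCoherentSet (etaSeq B κ '' C))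
    {F : Finset (Fin n → ℝ)} (hF : ↑F ⊆ C) (κ : List (Fin n)) :
    SignCoherentSet (etaSeq B κ '' insert (∑ f ∈ F, f) C) := by
  simpa using signCoherent_insert_sum_smul hC F (v := id) hF (c := fun _ => 1)
    (fun _ _ => zero_le_one) κ

lemma etaSeq_add_smul (hC : ∀ κ, SignCoherentSet (etaSeq B κ '' C)) {x y : Fin n → ℝ}
    (hx : x ∈ C) (hy : y ∈ C) {t : ℝ} (ht : 0 ≤ t) (κ : List (Fin n)) :
    etaSeq B κ (x + t • y) = etaSeq B κ x + t • etaSeq B κ y := by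
  simpa [Fin.sum_univ_two] using etaSeq_sum_smul B hC κ Finset.univ (v := ![x, y])
    (c := ![1, t]) (by simp [Fin.forall_fin_two, hx, hy]) (by simp [Fin.forall_fin_two, ht])

lemma etaSeq_apply_eq_zero_of_mem_span (hC : ∀ κ, SignCoherentSet (etaSeq B κ '' C))
    {F : Finset (Fin n → ℝ)} (hF : ↑F ⊆ C) {x : Fin n → ℝ} (hx : x ∈ C)
    (hxF : x ∈ Submodule.span ℝ (F : Set (Fin n → ℝ))) {κ : List (Fin n)} {j : Fin n}
    (h0 : etaSeq B κ (∑ f ∈ F, f) j = 0) : etaSeq B κ x j = 0 := by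
  have hsum : ∀ {c : (Fin n → ℝ) → ℝ}, (∀ f ∈ F, 0 ≤ c f) →
      etaSeq B κ (∑ f ∈ F, c f • f) j = ∑ f ∈ F, c f * etaSeq B κ f j := fun hc => by
    simpa using congrFun (etaSeq_sum_smul B hC κ F (v := id) hF hc) j
  have hF0 : ∀ f ∈ F, etaSeq B κ f j = 0 := by
    have h0' : ∑ f ∈ F, etaSeq B κ f j = 0 := by
      simpa [h0] using (hsum (c := fun _ => 1) fun _ _ => zero_le_one).symm
    rcases signCoherentSet_iff.mp (hC κ) j with h | h
    · exact (Finset.sum_eq_zero_iff_of_nonneg fun f hf =>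
        h _ (Set.mem_image_of_mem _ (hF hf))).mp h0'
    · exact (Finset.sum_eq_zero_iff_of_nonpos fun f hf =>
        h _ (Set.mem_image_of_mem _ (hF hf))).mp h0'
  obtain ⟨l, -, hl⟩ := Submodule.mem_span_finset.mp hxF
  -- once `t` dominates the coefficients of `x`, `x + t • ∑ f` is a nonnegative combination of `F`
  set t := ∑ f ∈ F, |l f|
  have ht : 0 ≤ t := Finset.sum_nonneg fun f _ => abs_nonneg (l f)
  have hlt : ∀ f ∈ F, 0 ≤ l f + t := fun f hf => by
    have := Finset.single_le_sum (fun g _ => abs_nonneg (l g)) hf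
    linarith [neg_abs_le (l f)]
  have hshift : x + t • ∑ f ∈ F, f = ∑ f ∈ F, (l f + t) • f := by
    simp [← hl, add_smul, Finset.sum_add_distrib, Finset.smul_sum]
  have key := congrFun (etaSeq_add_smul (signCoherent_insert_sum hC hF)
    (Set.mem_insert_of_mem _ hx) (Set.mem_insert _ _) ht κ) j
  rw [hshift, hsum hlt, Finset.sum_eq_zero fun f hf => by rw [hF0 f hf, mul_zero]] at key
  simpa [h0] using key.symm

lemma exists_subset_closure_bClass (hC : ∀ κ, SignCoherentSet (etaSeq B κ '' C)) :
    ∃ a, C ⊆ closure {a' | eqB B a a'} := by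
  obtain ⟨F, hFC, -, hspan, -⟩ := Submodule.exists_finset_span_eq_linearIndepOn ℝ C
  have hCa := signCoherent_insert_sum hC hFC
  set a := ∑ f ∈ F, f
  refine ⟨a, fun x hx => ?_⟩
  have hx' : x ∈ insert a C := Set.mem_insert_of_mem _ hx
  have hclass : ∀ ε : ℝ, 0 < ε → eqB B a (x + ε • a) := fun ε hε κ j => by
    rw [etaSeq_add_smul hCa hx' (Set.mem_insert _ _) hε.le, Pi.add_apply, Pi.smul_apply,
      smul_eq_mul, sign_add_mul_eq_sign _ _ hε]
    · exact (hCa κ).mul_nonneg (Set.mem_image_of_mem _ hx')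
        (Set.mem_image_of_mem _ (Set.mem_insert _ _)) j
    · exact etaSeq_apply_eq_zero_of_mem_span hC hFC hx (hspan ▸ Submodule.subset_span hx)
  have hlim : Filter.Tendsto (fun ε : ℝ => x + ε • a) (nhdsWithin 0 (Set.Ioi 0)) (nhds x) :=
    ((by fun_prop : Continuous fun ε : ℝ => x + ε • a).tendsto' 0 x (by simp)).mono_left
      nhdsWithin_le_nhds
  exact mem_closure_of_tendsto hlim (eventually_nhdsWithin_of_forall hclass)

end Cone

theorem subset_bCone_iff_signCoherent_general {n : ℕ}
    (B : Matrix (Fin n) (Fin n) ℤ) (C : Set (Fin n → ℝ)) :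
    (∃ D, IsBCone B D ∧ C ⊆ D) ↔
      ∀ κ : List (Fin n), SignCoherentSet (etaSeq B κ '' C) := by
  constructor
  · rintro ⟨_, ⟨_, ⟨a, rfl⟩, rfl⟩, hCD⟩ κ
    exact (signCoherent_closure_bClass B a κ).mono (Set.image_mono hCD)
  · intro hC
    obtain ⟨a, ha⟩ := exists_subset_closure_bClass hC
    exact ⟨_, ⟨_, ⟨a, rfl⟩, rfl⟩, ha⟩

/-- A set `C ⊆ ℝⁿ` is contained in some `B`-cone if and only if
`η_κ^B(C)` is sign-coherent for every finite sequence `κ` of indices. -/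
theorem subset_bCone_iff_signCoherent {n : ℕ} (hn : 1 ≤ n)
    (B : Matrix (Fin n) (Fin n) ℤ) (hB : IsExchangeMatrix B) (C : Set (Fin n → ℝ)) :
    (∃ D, IsBCone B D ∧ C ⊆ D) ↔
      ∀ κ : List (Fin n), SignCoherentSet (etaSeq B κ '' C) :=
  subset_bCone_iff_signCoherent_general B C

end MutationFanPaper
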